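/- Completeness of ℜ_d for the universal interpretation of nondeterministic functions: for every formula φ of 𝓛, ⊢_{ℜ_d} φ if and only if φ is a tautology of the standard enumeration ζ of nondeterministic partial recursive functions under the universal semantics, i.e. φ^† = ℕ for every valuation †. -/

import Mathlib

/-- Formulas of the modal language 𝓛: propositional variables, ⊥, →, and ▷. -/
inductive Formula : Type
  | var : ℕ → Formula
  | bot : Formula
  | imp : Formula → Formula → Formula
  | tri : Formula → Formula → Formula
deriving DecidableEq

namespace Formula

/-- ¬φ := φ → ⊥ -/
def neg (φ : Formula) : Formula := imp φ bot
/-- ⊤ := ¬⊥ -/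
def top : Formula := neg bot
/-- φ ∨ ψ := ¬φ → ψ -/
def disj (φ ψ : Formula) : Formula := imp (neg φ) ψ
/-- φ ∧ ψ := ¬(φ → ¬ψ) -/
def conj (φ ψ : Formula) : Formula := neg (imp φ (neg ψ))

/-- `φ` is a substitution instance of a classical propositional tautology:
it evaluates to `true` under every boolean valuation of formulas that
respects `⊥` and `→` (variables and `▷`-formulas are treated as atoms). -/
def IsPropTaut (φ : Formula) : Prop :=
  ∀ v : Formula → Bool, v bot = false →
    (∀ a b, v (imp a b) = (!(v a) || v b)) → v φ = true

/-- Hilbert-style provability.  `Prv false` is the logic ℜ (axioms: classical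
tautologies, A1, A2, A3; rules: Modus Ponens and monotonicity M);
`Prv true` is the logic ℜ_d, which additionally has axiom A4. -/
inductive Prv : Bool → Formula → Prop
  | taut {d : Bool} {φ} : IsPropTaut φ → Prv d φ
  | a1 {d : Bool} (φ ψ χ) : Prv d (imp (tri φ ψ) (imp (tri χ ψ) (tri (disj φ χ) ψ)))
  | a2 {d : Bool} (φ) : Prv d (tri bot φ)
  | a3 {d : Bool} (φ) : Prv d (tri φ top)
  | a4 (φ ψ χ) : Prv true (imp (tri φ ψ) (imp (tri φ χ) (tri φ (conj ψ χ))))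
  | mp {d : Bool} {φ ψ} : Prv d (imp φ ψ) → Prv d φ → Prv d ψ
  | mono {d : Bool} {φ₁ φ₂ ψ₁ ψ₂} : Prv d (imp φ₁ φ₂) → Prv d (imp ψ₁ ψ₂) →
      Prv d (imp (tri φ₂ ψ₁) (tri φ₁ ψ₂))

/-- `Deriv d Δ φ`: φ is derivable from the hypotheses Δ together with all
theorems of the logic (`Prv d`) using only Modus Ponens. -/
inductive Deriv (d : Bool) (Δ : Set Formula) : Formula → Prop
  | hyp {φ} : φ ∈ Δ → Deriv d Δ φ
  | thm {φ} : Prv d φ → Deriv d Δ φ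
  | mp {φ ψ} : Deriv d Δ (imp φ ψ) → Deriv d Δ φ → Deriv d Δ ψ

/-- Conjunction of a list of formulas (empty conjunction is ⊤). -/
def conjList : List Formula → Formula
  | [] => top
  | φ :: l => conj φ (conjList l)

/-- ⋀Γ : conjunction of all formulas of a finite set Γ (⋀∅ = ⊤). -/
noncomputable def bigConj (Γ : Finset Formula) : Formula := conjList Γ.toList

/-- A set of formulas is consistent if ⊥ is not derivable from it. -/
def Consistent (d : Bool) (Δ : Set Formula) : Prop := ¬ Deriv d Δ bot

/-- The pair (u,v) is w-consistent: w ⊬ ⋀u ▷ ¬⋀v. -/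
def WCons (d : Bool) (w : Set Formula) (u v : Finset Formula) : Prop :=
  ¬ Deriv d w (tri (bigConj u) (neg (bigConj v)))

/-- The operation ∼: ∼(¬φ) = φ, and ∼φ = ¬φ if φ is not a negation. -/
def simNeg : Formula → Formula
  | imp φ bot => φ
  | φ => neg φ

/-- Φ is closed under subformulas. -/
def SubClosed (Φ : Finset Formula) : Prop :=
  (∀ a b, imp a b ∈ Φ → a ∈ Φ ∧ b ∈ Φ) ∧ (∀ a b, tri a b ∈ Φ → a ∈ Φ ∧ b ∈ Φ)

/-- Φ is closed under the operation ∼. -/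
def SimClosed (Φ : Finset Formula) : Prop := ∀ φ ∈ Φ, simNeg φ ∈ Φ

/-- w is a maximal consistent subset of Φ: w ⊆ Φ, w is consistent, and for
every φ ∈ Φ either φ ∈ w or ∼φ ∈ w. -/
def MaxCons (d : Bool) (Φ : Finset Formula) (w : Finset Formula) : Prop :=
  w ⊆ Φ ∧ Consistent d ↑w ∧ ∀ φ ∈ Φ, φ ∈ w ∨ simNeg φ ∈ w

/-- Kripke forcing: `rel w u v` means u →_w v, `val w p` means w ⊩ p. -/
def Forces {W : Type*} (rel : W → W → W → Prop) (val : W → ℕ → Prop) :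
    W → Formula → Prop
  | w, var p => val w p
  | _, bot => False
  | w, imp a b => Forces rel val w a → Forces rel val w b
  | w, tri a b => ∀ u v, rel w u v → Forces rel val u a →
      ∃ v', rel w u v' ∧ Forces rel val v' b

end Formula

/-- A Kripke model: a finite set of worlds, a ternary computability relation,
and a forcing relation between worlds and propositional variables. -/
structure KripkeModel where
  W : Type
  fin : Finite W
  rel : W → W → W → Prop
  val : W → ℕ → Prop

/-- A Kripke model is deterministic if for all worlds w, u there is at most
one v with u →_w v. -/
def KripkeModel.Deterministic (M : KripkeModel) : Prop :=
  ∀ w u v v', M.rel w u v → M.rel w u v' → v = v'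

/-- Forcing in a Kripke model. -/
def KripkeModel.Forces (M : KripkeModel) : M.W → Formula → Prop :=
  Formula.Forces M.rel M.val

/-- The standard enumeration of nondeterministic partial recursive functions:
ζ_w(u) = the set of possible outputs of machine (code) w on input u. -/
def zeta (w u : ℕ) : Set ℕ :=
  {v | ((Denumerable.ofNat Nat.Partrec.Code w).eval (Nat.pair u v)).Dom}

/-- The standard enumeration of deterministic partial recursive functions:
ξ_w(u) = the value of the partial recursive function with code w on input u. -/
def xi (w u : ℕ) : Part ℕ :=
  (Denumerable.ofNat Nat.Partrec.Code w).eval u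

namespace Formula

/-- Set semantics for nondeterministic partial recursive functions
(existential reading of ▷). -/
def semN (val : ℕ → Set ℕ) : Formula → Set ℕ
  | var p => val p
  | bot => ∅
  | imp a b => (Set.univ \ semN val a) ∪ semN val b
  | tri a b => {w | ∀ u ∈ semN val a, zeta w u ≠ ∅ → zeta w u ∩ semN val b ≠ ∅}

/-- Set semantics for deterministic partial recursive functions. -/
def semD (val : ℕ → Set ℕ) : Formula → Set ℕ
  | var p => val p
  | bot => ∅
  | imp a b => (Set.univ \ semD val a) ∪ semD val b
  | tri a b => {w | ∀ u ∈ semD val a, ∀ h : (xi w u).Dom, (xi w u).get h ∈ semD val b}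

/-- Universal set semantics for nondeterministic partial recursive functions:
every terminating computation path from φ* ends in ψ*. -/
def semU (val : ℕ → Set ℕ) : Formula → Set ℕ
  | var p => val p
  | bot => ∅
  | imp a b => (Set.univ \ semU val a) ∪ semU val b
  | tri a b => {w | ∀ u ∈ semU val a, zeta w u ⊆ semU val b}

/-- A canonical injective encoding of formulas as natural numbers. -/
def enc : Formula → ℕ
  | var n => 4 * n
  | bot => 1
  | imp a b => 4 * Nat.pair (enc a) (enc b) + 2
  | tri a b => 4 * Nat.pair (enc a) (enc b) + 3

end Formula


/-!
Soundness is an induction on derivations. For completeness, an unprovable `φ` is refuted in a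
finite canonical model: its worlds are the maximal consistent subsets of the `∼`-closure `Φ` of the
subformulas of `φ`, and `u →_w v` holds when `b ∈ v` for all `a ▷ b ∈ w` with `a ∈ u`. If every
`v` with `u →_w v` contains `b`, then the requirements that `w` and `u` put on such `v` prove `b`;
A4 collects them into one formula, giving `w ⊢ ⋀u ▷ b` (by A2 when `u` is inconsistent), and A1
merges these over the finitely many complete subsets `u ∋ a` of `Φ`, whose conjunctions cover `a`,
into `w ⊢ a ▷ b`, hence `a ▷ b ∈ w`.

By Kleene's recursion theorem every finite ternary frame is realized inside `ζ`: there are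
injective codes `c` with `ζ_{c w}(n) = {c v | u →_w v, n = c u}`. Under such codes the universal
semantics computes Kripke forcing, so the canonical countermodel yields a valuation `†` with
`φ^† ≠ ℕ`.
-/

open Nat.Partrec Nat.Partrec.Code in
theorem exists_injective_code_zeta_eq (T : Finset (ℕ × ℕ × ℕ)) :
    ∃ c : ℕ → ℕ, Function.Injective c ∧
      ∀ i n, zeta (c i) n = {m | ∃ j l, (i, j, l) ∈ T ∧ n = c j ∧ m = c l} := by
  classical
  let g (e j : ℕ) : ℕ := Encodable.encode (curry (Denumerable.ofNat Code e) j)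
  have hg : Primrec₂ g := Primrec.encode.comp₂ (primrec₂_curry.comp₂
    ((Primrec.ofNat Code).comp₂ Primrec₂.left) Primrec₂.right)
  let Accepts (e n : ℕ) : Prop :=
    ∃ t ∈ T.toList, n = Nat.pair t.1 (Nat.pair (g e t.2.1) (g e t.2.2))
  have hAccepts : PrimrecRel Accepts := by
    have hR : PrimrecRel fun (t : ℕ × ℕ × ℕ) (b : ℕ × ℕ) =>
        b.2 = Nat.pair t.1 (Nat.pair (g b.1 t.2.1) (g b.1 t.2.2)) :=
      Primrec.eq.comp (Primrec.snd.comp Primrec.snd) (Primrec₂.natPair.comp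
        (Primrec.fst.comp Primrec.fst) (Primrec₂.natPair.comp
          (hg.comp (Primrec.fst.comp Primrec.snd) (Primrec.fst.comp (Primrec.snd.comp .fst)))
          (hg.comp (Primrec.fst.comp Primrec.snd) (Primrec.snd.comp (Primrec.snd.comp .fst)))))
    exact hR.exists_mem_list.comp (Primrec.const T.toList) (Primrec.pair Primrec.fst Primrec.snd)
  have hF : Partrec₂ fun (c : Code) (n : ℕ) =>
      ((if Accepts (Encodable.encode c) n then some 0 else none : Option ℕ) : Part ℕ) :=
    Computable.ofOption (Primrec.ite (hAccepts.comp (Primrec.encode.comp .fst) Primrec.snd)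
      (Primrec.const _) (Primrec.const _)).to_comp
  -- `c₀` halts on `⟨i, n, m⟩` iff `n, m` are its own curried codes `g c₀ j, g c₀ l` for some
  -- `(i, j, l) ∈ T`; the curried codes `g c₀ i` are the required machines.
  obtain ⟨c₀, hc₀⟩ := fixed_point₂ hF
  refine ⟨g (Encodable.encode c₀), fun i j h => (curry_inj (Encodable.encode_injective h)).2, ?_⟩
  intro i n
  ext m
  have hAcc : Accepts (Encodable.encode c₀) (Nat.pair i (Nat.pair n m)) ↔
      ∃ j l, (i, j, l) ∈ T ∧ n = g (Encodable.encode c₀) j ∧ m = g (Encodable.encode c₀) l := by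
    simp only [Accepts, Finset.mem_toList, Nat.pair_eq_pair, Prod.exists]
    grind
  refine Iff.trans ?_ hAcc
  simp only [zeta, g, Denumerable.ofNat_encode, eval_curry, hc₀, Set.mem_ofPred_eq]
  split_ifs with h <;> simp [h]

theorem exists_injective_code_zeta_eq_of_finite {W : Type*} [Finite W] (R : W → W → W → Prop) :
    ∃ c : W → ℕ, Function.Injective c ∧
      ∀ w n, zeta (c w) n = {m | ∃ u v, R w u v ∧ n = c u ∧ m = c v} := by
  classical
  have := Fintype.ofFinite W
  obtain ⟨e, he⟩ := Countable.exists_injective_nat W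
  obtain ⟨c, hc, hζ⟩ := exists_injective_code_zeta_eq
    ((Finset.univ.filter fun t : W × W × W => R t.1 t.2.1 t.2.2).image
      fun t => (e t.1, e t.2.1, e t.2.2))
  refine ⟨c ∘ e, hc.comp he, fun w n => ?_⟩
  rw [Function.comp_apply, hζ]
  ext m
  simp only [Finset.mem_image, Finset.mem_filter, Finset.mem_univ, true_and, Prod.exists,
    Prod.mk.injEq, Set.mem_ofPred_eq, Function.comp_apply, he.eq_iff]
  grind

namespace Formula

def disjList : List Formula → Formula
  | [] => bot
  | φ :: l => disj φ (disjList l)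

section BoolValuation

variable {v : Formula → Bool}

theorem simNeg_eval (hb : v bot = false) (hi : ∀ a b, v (imp a b) = (!v a || v b))
    (φ : Formula) : v (simNeg φ) = !v φ := by
  rcases φ with _ | _ | ⟨a, _ | _ | _ | _⟩ | _ <;> simp [simNeg, neg, hi, hb]

theorem conjList_eval (hb : v bot = false) (hi : ∀ a b, v (imp a b) = (!v a || v b))
    (L : List Formula) : v (conjList L) = L.all v := by
  induction L with
  | nil => simp [conjList, top, neg, hi, hb]
  | cons x L ih => simp [conjList, conj, neg, hi, hb, ih]

theorem disjList_eval (hb : v bot = false) (hi : ∀ a b, v (imp a b) = (!v a || v b))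
    (L : List Formula) : v (disjList L) = L.any v := by
  induction L with
  | nil => simp [disjList, hb]
  | cons x L ih => simp [disjList, disj, neg, hi, hb, ih]

end BoolValuation

variable {d : Bool} {Δ : Set Formula} {Φ S w u : Finset Formula} {φ ψ a b : Formula}

theorem prv_of_deriv_empty (h : Deriv d ∅ φ) : Prv d φ := by
  induction h with
  | hyp h => exact absurd h (Set.notMem_empty _)
  | thm h => exact h
  | mp _ _ ih₁ ih₂ => exact ih₁.mp ih₂

theorem Deriv.mp_thm (h : Prv d (imp φ ψ)) (hφ : Deriv d Δ φ) : Deriv d Δ ψ :=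
  (Deriv.thm h).mp hφ

theorem Deriv.deduction (h : Deriv d (insert ψ Δ) φ) : Deriv d Δ (imp ψ φ) := by
  induction h with
  | @hyp χ h =>
    rcases h with rfl | h
    · exact .thm <| .taut fun v hb hi => by simp only [hi]; grind
    · exact .mp_thm (.taut fun v hb hi => by simp only [hi]; grind) (.hyp h)
  | @thm χ h => exact .mp_thm (.taut fun v hb hi => by simp only [hi]; grind) (.thm h)
  | @mp χ ρ _ _ ih₁ ih₂ =>
    exact (Deriv.mp_thm (ψ := imp (imp ψ χ) (imp ψ ρ))
      (.taut fun v hb hi => by simp only [hi]; grind) ih₁).mp ih₂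

theorem prv_imp_self (a : Formula) : Prv d (imp a a) :=
  .taut fun v hb hi => by simp only [hi]; grind

theorem Deriv.tri_mono {a' b'} (ha : Prv d (imp a' a)) (hb : Prv d (imp b b'))
    (h : Deriv d Δ (tri a b)) : Deriv d Δ (tri a' b') :=
  .mp_thm (.mono ha hb) h

theorem prv_conjList_imp_of_mem {L : List Formula} (hφ : φ ∈ L) : Prv d (imp (conjList L) φ) :=
  .taut fun v hb hi => by
    simp only [hi, conjList_eval hb hi]
    grind [List.all_eq_true]

theorem prv_conjList_imp_of_deriv {L : List Formula} (h : Deriv d {x | x ∈ L} φ) :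
    Prv d (imp (conjList L) φ) := by
  induction L generalizing φ with
  | nil =>
    have hφ : Prv d φ := prv_of_deriv_empty (by simpa using h)
    exact .mp (.taut fun v hb hi => by simp only [hi]; grind) hφ
  | cons a L ih =>
    have h' : Deriv d (insert a {x | x ∈ L}) φ := by simpa [Set.insert_def] using h
    exact .mp (.taut fun v hb hi => by simp only [hi, conjList, conj, neg, hb]; grind)
      (ih h'.deduction)

theorem prv_bigConj_imp_of_mem (hφ : φ ∈ S) : Prv d (imp (bigConj S) φ) :=
  prv_conjList_imp_of_mem (Finset.mem_toList.2 hφ)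

theorem prv_bigConj_imp_of_deriv (h : Deriv d ↑S φ) : Prv d (imp (bigConj S) φ) :=
  prv_conjList_imp_of_deriv (by simpa using h)

theorem Deriv.tri_disjList {L : List Formula} (h : ∀ x ∈ L, Deriv d Δ (tri x b)) :
    Deriv d Δ (tri (disjList L) b) := by
  induction L with
  | nil => exact .thm (.a2 b)
  | cons x L ih =>
    exact ((Deriv.thm (.a1 x b _)).mp (h x (by simp))).mp (ih fun y hy => h y (by simp [hy]))

theorem Deriv.tri_conjList {L : List Formula} (h : ∀ y ∈ L, Deriv true Δ (tri a y)) :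
    Deriv true Δ (tri a (conjList L)) := by
  induction L with
  | nil => exact .thm (.a3 a)
  | cons y L ih =>
    exact ((Deriv.thm (.a4 a y _)).mp (h y (by simp))).mp (ih fun z hz => h z (by simp [hz]))

theorem Deriv.bot_of_simNeg (h : Deriv d Δ φ) (h' : Deriv d Δ (simNeg φ)) : Deriv d Δ bot :=
  (Deriv.mp_thm (.taut fun v hb hi => by simp only [hi, simNeg_eval hb hi]; grind) h).mp h'

theorem Consistent.insert_or_insert_simNeg (hS : Consistent d ↑S) (φ : Formula) :
    Consistent d ↑(insert φ S) ∨ Consistent d ↑(insert (simNeg φ) S) := by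
  by_contra! ⟨h, h'⟩
  simp only [Consistent, not_not, Finset.coe_insert] at h h'
  exact hS <| (Deriv.mp_thm
    (.taut fun v hb hi => by simp only [hi, hb, simNeg_eval hb hi]; grind) h.deduction).mp
    h'.deduction

namespace MaxCons

variable (hw : MaxCons d Φ w)
include hw

theorem simNeg_not_mem (h : φ ∈ w) : simNeg φ ∉ w := fun h' =>
  hw.2.1 (.bot_of_simNeg (.hyp h) (.hyp h'))

theorem mem_of_deriv (hφ : φ ∈ Φ) (h : Deriv d ↑w φ) : φ ∈ w :=
  (hw.2.2 φ hφ).resolve_right fun h' => hw.2.1 (h.bot_of_simNeg (.hyp h'))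

theorem imp_mem_iff (hΦ : SubClosed Φ) (hab : imp a b ∈ Φ) :
    imp a b ∈ w ↔ (a ∈ w → b ∈ w) := by
  obtain ⟨ha, hb⟩ := hΦ.1 a b hab
  refine ⟨fun h h' => hw.mem_of_deriv hb ((Deriv.hyp h).mp (.hyp h')), fun h => ?_⟩
  refine (hw.2.2 _ hab).resolve_right fun hn => ?_
  have hn : Deriv d ↑w (simNeg (imp a b)) := .hyp hn
  have ha' : a ∈ w := hw.mem_of_deriv ha
    (.mp_thm (.taut fun v hb hi => by simp only [hi, simNeg_eval hb hi]; grind) hn)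
  exact hw.2.1 <| (Deriv.mp_thm
    (.taut fun v hb hi => by simp only [hi, hb, simNeg_eval hb hi]; grind) hn).mp (.hyp (h ha'))

end MaxCons

theorem exists_maxCons_superset (hΦ : SimClosed Φ) (hSΦ : S ⊆ Φ) (hS : Consistent d ↑S) :
    ∃ w, MaxCons d Φ w ∧ S ⊆ w := by
  classical
  suffices ∀ T ⊆ Φ, ∀ S ⊆ Φ, Consistent d ↑S →
      ∃ w, S ⊆ w ∧ w ⊆ Φ ∧ Consistent d ↑w ∧ ∀ φ ∈ T, φ ∈ w ∨ simNeg φ ∈ w by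
    obtain ⟨w, hSw, hwΦ, hw, hdec⟩ := this Φ subset_rfl S hSΦ hS
    exact ⟨w, ⟨hwΦ, hw, hdec⟩, hSw⟩
  intro T hTΦ
  induction T using Finset.induction_on with
  | empty => exact fun S hSΦ hS => ⟨S, subset_rfl, hSΦ, hS, by simp⟩
  | insert φ T _ ih =>
    intro S hSΦ hS
    obtain ⟨hφ, hTΦ⟩ := Finset.insert_subset_iff.1 hTΦ
    obtain ⟨ψ, hψ, hψΦ, hSψ⟩ :
        ∃ ψ, (φ = ψ ∨ simNeg φ = ψ) ∧ ψ ∈ Φ ∧ Consistent d ↑(insert ψ S) := by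
      rcases hS.insert_or_insert_simNeg φ with h | h
      exacts [⟨φ, .inl rfl, hφ, h⟩, ⟨simNeg φ, .inr rfl, hΦ φ hφ, h⟩]
    obtain ⟨w, hSw, hwΦ, hw, hdec⟩ := ih hTΦ _ (Finset.insert_subset hψΦ hSΦ) hSψ
    refine ⟨w, (Finset.subset_insert _ _).trans hSw, hwΦ, hw, fun χ hχ => ?_⟩
    rcases Finset.mem_insert.1 hχ with rfl | hχ
    · rcases hψ with rfl | rfl <;> simp [hSw (Finset.mem_insert_self _ _)]
    · exact hdec χ hχ

def subf : Formula → Finset Formula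
  | var n => {var n}
  | bot => {bot}
  | imp a b => insert (imp a b) (subf a ∪ subf b)
  | tri a b => insert (tri a b) (subf a ∪ subf b)

theorem mem_subf_self (φ : Formula) : φ ∈ subf φ := by
  cases φ <;> simp [subf]

theorem subf_subset_of_mem (h : ψ ∈ subf φ) : subf ψ ⊆ subf φ := by
  induction φ with
  | var n | bot => simp_all [subf]
  | imp a b iha ihb | tri a b iha ihb =>
    simp only [subf, Finset.mem_insert, Finset.mem_union] at h
    rcases h with rfl | h | h
    · rfl
    · exact (iha h).trans (Finset.subset_union_left.trans (Finset.subset_insert _ _))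
    · exact (ihb h).trans (Finset.subset_union_right.trans (Finset.subset_insert _ _))

theorem subClosed_subf (φ : Formula) : SubClosed (subf φ) := by
  constructor <;> intro a b h <;> have := subf_subset_of_mem h <;>
    exact ⟨this (by simp [subf, mem_subf_self]), this (by simp [subf, mem_subf_self])⟩

theorem simNeg_eq_neg_or : simNeg φ = neg φ ∨ φ = neg (simNeg φ) := by
  rcases φ with _ | _ | ⟨a, _ | _ | _ | _⟩ | _ <;> simp [simNeg, neg]

def negClosure (S : Finset Formula) : Finset Formula := S ∪ S.image simNeg

namespace SubClosed

variable (hS : SubClosed S)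
include hS

theorem simNeg_eq_neg_or_mem (hψ : ψ ∈ S) :
    simNeg ψ = neg ψ ∨ simNeg ψ ∈ S ∧ ψ = neg (simNeg ψ) := by
  refine simNeg_eq_neg_or.imp_right fun h => ⟨(hS.1 _ bot ?_).1, h⟩
  rwa [h] at hψ

theorem insert_bot : SubClosed (insert bot S) := by
  refine ⟨fun a b h => ?_, fun a b h => ?_⟩ <;> rcases Finset.mem_insert.1 h with h | h
  · cases h
  · exact (hS.1 a b h).imp (Finset.mem_insert_of_mem ·) (Finset.mem_insert_of_mem ·)
  · cases h
  · exact (hS.2 a b h).imp (Finset.mem_insert_of_mem ·) (Finset.mem_insert_of_mem ·)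

theorem negClosure (hbot : bot ∈ S) : SubClosed (negClosure S) := by
  have hsub : S ⊆ Formula.negClosure S := Finset.subset_union_left
  refine ⟨fun a b h => ?_, fun a b h => ?_⟩ <;>
    simp only [Formula.negClosure, Finset.mem_union, Finset.mem_image] at h
  · rcases h with h | ⟨ψ, hψ, h⟩
    · exact ⟨hsub (hS.1 a b h).1, hsub (hS.1 a b h).2⟩
    · rcases hS.simNeg_eq_neg_or_mem hψ with h' | ⟨h', -⟩
      · obtain ⟨rfl, rfl⟩ : ψ = a ∧ bot = b := by simpa [h', neg] using h
        exact ⟨hsub hψ, hsub hbot⟩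
      · rw [h] at h'
        exact ⟨hsub (hS.1 a b h').1, hsub (hS.1 a b h').2⟩
  · rcases h with h | ⟨ψ, hψ, h⟩
    · exact ⟨hsub (hS.2 a b h).1, hsub (hS.2 a b h).2⟩
    · rcases hS.simNeg_eq_neg_or_mem hψ with h' | ⟨h', -⟩
      · simp [h', neg] at h
      · rw [h] at h'
        exact ⟨hsub (hS.2 a b h').1, hsub (hS.2 a b h').2⟩

theorem simClosed_negClosure : SimClosed (Formula.negClosure S) := by
  intro φ hφ
  simp only [Formula.negClosure, Finset.mem_union, Finset.mem_image] at hφ ⊢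
  rcases hφ with h | ⟨ψ, hψ, rfl⟩
  · exact .inr ⟨φ, h, rfl⟩
  · rcases hS.simNeg_eq_neg_or_mem hψ with h | ⟨h, -⟩
    · exact .inl (by rw [h]; exact hψ)
    · exact .inr ⟨_, h, rfl⟩

end SubClosed

def CanonicalRel (w u v : Finset Formula) : Prop := ∀ a b, tri a b ∈ w → a ∈ u → b ∈ v

noncomputable def requiredSucc (Φ w u : Finset Formula) : Finset Formula := by
  classical exact Φ.filter fun b => ∃ a ∈ u, tri a b ∈ w

theorem mem_requiredSucc : b ∈ requiredSucc Φ w u ↔ b ∈ Φ ∧ ∃ a ∈ u, tri a b ∈ w := by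
  classical simp [requiredSucc]

theorem canonicalRel_of_requiredSucc_subset {v : Finset Formula} (hΦ : SubClosed Φ)
    (hw : w ⊆ Φ) (h : requiredSucc Φ w u ⊆ v) : CanonicalRel w u v := fun a b hab ha =>
  h (mem_requiredSucc.2 ⟨(hΦ.2 a b (hw hab)).2, a, ha, hab⟩)

theorem deriv_tri_bigConj_requiredSucc (Φ w u : Finset Formula) :
    Deriv true ↑w (tri (bigConj u) (bigConj (requiredSucc Φ w u))) := by
  refine Deriv.tri_conjList fun b hb => ?_
  obtain ⟨-, a, ha, hab⟩ := mem_requiredSucc.1 (Finset.mem_toList.1 hb)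
  exact (Deriv.hyp hab).tri_mono (prv_bigConj_imp_of_mem ha) (prv_imp_self b)

theorem prv_bigConj_requiredSucc_imp (hsub : SubClosed Φ) (hsim : SimClosed Φ) (hw : w ⊆ Φ)
    (hb : b ∈ Φ) (H : ∀ v, MaxCons d Φ v → CanonicalRel w u v → b ∈ v) :
    Prv d (imp (bigConj (requiredSucc Φ w u)) b) := by
  have hincons : ¬ Consistent d ↑(insert (simNeg b) (requiredSucc Φ w u)) := fun hc => by
    obtain ⟨v, hv, hsv⟩ := exists_maxCons_superset hsim
      (Finset.insert_subset (hsim b hb) fun _ hx => (mem_requiredSucc.1 hx).1) hc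
    exact hv.simNeg_not_mem (H v hv (canonicalRel_of_requiredSucc_subset hsub hw
      ((Finset.subset_insert _ _).trans hsv))) (hsv (Finset.mem_insert_self _ _))
  rw [Consistent, not_not, Finset.coe_insert] at hincons
  exact .mp (.taut fun v hb hi => by simp only [hi, hb, simNeg_eval hb hi]; grind)
    (prv_bigConj_imp_of_deriv hincons.deduction)

noncomputable def completeSubsets (Φ : Finset Formula) : Finset (Finset Formula) := by
  classical exact Φ.powerset.filter fun u => ∀ φ ∈ Φ, φ ∈ u ∨ simNeg φ ∈ u

theorem mem_completeSubsets :
    u ∈ completeSubsets Φ ↔ u ⊆ Φ ∧ ∀ φ ∈ Φ, φ ∈ u ∨ simNeg φ ∈ u := by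
  classical simp [completeSubsets]

theorem prv_imp_disjList_completeSubsets (hsim : SimClosed Φ) (ha : a ∈ Φ) :
    Prv d (imp a (disjList (((completeSubsets Φ).filter (a ∈ ·)).toList.map bigConj))) := by
  classical
  refine .taut fun v hb hi => ?_
  rw [hi, disjList_eval hb hi]
  cases hva : v a
  · rfl
  suffices ∃ u, (u ∈ completeSubsets Φ ∧ a ∈ u) ∧ v (bigConj u) = true by simpa
  refine ⟨Φ.filter (v · = true),
    ⟨mem_completeSubsets.2 ⟨Finset.filter_subset _ _, fun φ hφ => ?_⟩, by simp [ha, hva]⟩, ?_⟩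
  · cases hvφ : v φ
    · exact .inr (Finset.mem_filter.2 ⟨hsim φ hφ, by simp [simNeg_eval hb hi, hvφ]⟩)
    · exact .inl (Finset.mem_filter.2 ⟨hφ, hvφ⟩)
  · simp [bigConj, conjList_eval hb hi]

theorem deriv_tri_bigConj_of_mem_completeSubsets (hsub : SubClosed Φ) (hsim : SimClosed Φ)
    (hw : w ⊆ Φ) (hb : b ∈ Φ) (hu : u ∈ completeSubsets Φ)
    (H : MaxCons true Φ u → ∀ v, MaxCons true Φ v → CanonicalRel w u v → b ∈ v) :
    Deriv true ↑w (tri (bigConj u) b) := by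
  by_cases hcons : Consistent true ↑u
  · obtain ⟨huΦ, hdec⟩ := mem_completeSubsets.1 hu
    exact (deriv_tri_bigConj_requiredSucc Φ w u).tri_mono (prv_imp_self _)
      (prv_bigConj_requiredSucc_imp hsub hsim hw hb (H ⟨huΦ, hcons, hdec⟩))
  · rw [Consistent, not_not] at hcons
    exact (Deriv.thm (.a2 b)).tri_mono (prv_bigConj_imp_of_deriv hcons) (prv_imp_self b)

theorem MaxCons.tri_mem (hsub : SubClosed Φ) (hsim : SimClosed Φ) (hw : MaxCons true Φ w)
    (hab : tri a b ∈ Φ) (H : ∀ u v, MaxCons true Φ u → MaxCons true Φ v → a ∈ u →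
      CanonicalRel w u v → b ∈ v) : tri a b ∈ w := by
  classical
  obtain ⟨ha, hb⟩ := hsub.2 a b hab
  refine hw.mem_of_deriv hab <| Deriv.tri_mono (prv_imp_disjList_completeSubsets hsim ha)
    (prv_imp_self b) (Deriv.tri_disjList fun x hx => ?_)
  obtain ⟨u, hu, rfl⟩ := List.mem_map.1 hx
  obtain ⟨hu, hau⟩ := Finset.mem_filter.1 (Finset.mem_toList.1 hu)
  exact deriv_tri_bigConj_of_mem_completeSubsets hsub hsim hw.1 hb hu
    fun hu' v hv => H u v hu' hv hau

def UForces {W : Type*} (R : W → W → W → Prop) (V : W → ℕ → Prop) : W → Formula → Prop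
  | w, var p => V w p
  | _, bot => False
  | w, imp a b => UForces R V w a → UForces R V w b
  | w, tri a b => ∀ u v, R w u v → UForces R V u a → UForces R V v b

def canonicalModel (Φ : Finset Formula) : KripkeModel where
  W := {u : Finset Formula // MaxCons true Φ u}
  fin := (Φ.powerset.finite_toSet.subset fun _ hu => Finset.mem_powerset.2 hu.1).to_subtype
  rel w u v := CanonicalRel w.1 u.1 v.1
  val w p := var p ∈ w.1

theorem uForces_canonicalModel_iff (hsub : SubClosed Φ) (hsim : SimClosed Φ) (hφ : φ ∈ Φ)
    (w : (canonicalModel Φ).W) :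
    UForces (canonicalModel Φ).rel (canonicalModel Φ).val w φ ↔ φ ∈ w.1 := by
  induction φ generalizing w with
  | var p => rfl
  | bot => exact iff_of_false id fun h => w.2.2.1 (.hyp h)
  | imp a b iha ihb =>
    obtain ⟨ha, hb⟩ := hsub.1 a b hφ
    rw [w.2.imp_mem_iff hsub hφ, ← iha ha, ← ihb hb]
    rfl
  | tri a b iha ihb =>
    obtain ⟨ha, hb⟩ := hsub.2 a b hφ
    refine ⟨fun h => w.2.tri_mem hsub hsim hφ fun u v hu hv hau huv => ?_,
      fun h u v huv hu => (ihb hb v).2 (huv a b h ((iha ha u).1 hu))⟩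
    exact (ihb hb ⟨v, hv⟩).1 (h ⟨u, hu⟩ ⟨v, hv⟩ huv ((iha ha ⟨u, hu⟩).2 hau))

theorem exists_kripkeModel_not_uForces (h : ¬ Prv true φ) :
    ∃ (M : KripkeModel) (w : M.W), ¬ UForces M.rel M.val w φ := by
  let Φ := negClosure (insert bot (subf φ))
  have hS : SubClosed (insert bot (subf φ)) := (subClosed_subf φ).insert_bot
  have hsub : SubClosed Φ := hS.negClosure (Finset.mem_insert_self _ _)
  have hsim : SimClosed Φ := hS.simClosed_negClosure
  have hφ : φ ∈ Φ := Finset.mem_union_left _ (Finset.mem_insert_of_mem (mem_subf_self φ))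
  have hcons : Consistent true ↑({simNeg φ} : Finset Formula) := fun hbot => by
    have hbot : Deriv true (insert (simNeg φ) ∅) bot := by simpa using hbot
    exact h <| .mp (.taut fun v hb hi => by simp only [hi, hb, simNeg_eval hb hi]; grind)
      (prv_of_deriv_empty hbot.deduction)
  obtain ⟨w, hw, hφw⟩ := exists_maxCons_superset hsim (by simpa using hsim φ hφ) hcons
  refine ⟨canonicalModel Φ, ⟨w, hw⟩, fun hforces => ?_⟩
  exact hw.simNeg_not_mem ((uForces_canonicalModel_iff hsub hsim hφ _).1 hforces)
    (hφw (Finset.mem_singleton_self _))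

theorem mem_semU_image_iff_uForces {W : Type*} {R : W → W → W → Prop} {V : W → ℕ → Prop}
    {c : W → ℕ} (hc : Function.Injective c)
    (hζ : ∀ w n, zeta (c w) n = {m | ∃ u v, R w u v ∧ n = c u ∧ m = c v})
    (φ : Formula) (w : W) : c w ∈ semU (fun p => c '' {w | V w p}) φ ↔ UForces R V w φ := by
  induction φ generalizing w with
  | var p => simp [semU, UForces, hc.eq_iff]
  | bot => simp [semU, UForces]
  | imp a b iha ihb => simp [semU, UForces, ← iha, ← ihb]; tauto
  | tri a b iha ihb =>
    simp only [semU, UForces, Set.mem_ofPred_eq, hζ]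
    constructor
    · intro h u v huv hu
      exact (ihb v).1 (h _ ((iha u).2 hu) ⟨u, v, huv, rfl, rfl⟩)
    · rintro h n hn m ⟨u, v, huv, rfl, rfl⟩
      exact (ihb v).2 (h u v huv ((iha u).1 hn))

theorem mem_semU_imp {val : ℕ → Set ℕ} {n : ℕ} :
    n ∈ semU val (imp a b) ↔ (n ∈ semU val a → n ∈ semU val b) := by
  simp [semU, imp_iff_not_or]

theorem semU_eq_univ_of_prv (h : Prv d φ) (val : ℕ → Set ℕ) : semU val φ = Set.univ := by
  classical
  refine Set.eq_univ_of_forall fun n => ?_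
  induction h generalizing n with
  | taut h =>
    simpa using h (fun θ => decide (n ∈ semU val θ)) (by simp [semU])
      fun a b => by simp [mem_semU_imp, imp_iff_not_or]
  | a1 a b c => simp [semU, disj, neg]; grind
  | a2 a => simp [semU]
  | a3 a => simp [semU, top, neg]
  | a4 a b c => simp [semU, conj, neg]; grind
  | mp _ _ ih₁ ih₂ => exact mem_semU_imp.1 (ih₁ n) (ih₂ n)
  | mono _ _ ih₁ ih₂ =>
    exact mem_semU_imp.2 fun h u hu m hm =>
      mem_semU_imp.1 (ih₂ m) (h u (mem_semU_imp.1 (ih₁ u) hu) hm)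

end Formula

open Formula in
/-- Completeness of ℜ_d for the universal interpretation of nondeterministic
partial recursive functions: ⊢_{ℜ_d} φ iff φ evaluates to all of ℕ under
every valuation, where (φ▷ψ)^† = {w | ∀ u ∈ φ^†, ζ_w(u) ⊆ ψ^†}. -/
theorem universal_semantics_Rd (φ : Formula) :
    Prv true φ ↔ ∀ val : ℕ → Set ℕ, semU val φ = Set.univ := by
  refine ⟨fun h val => semU_eq_univ_of_prv h val, fun h => ?_⟩
  by_contra hφ
  obtain ⟨M, w, hw⟩ := exists_kripkeModel_not_uForces hφ
  have := M.fin
  obtain ⟨c, hc, hζ⟩ := exists_injective_code_zeta_eq_of_finite M.rel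
  exact hw ((mem_semU_image_iff_uForces hc hζ φ w).1 (h _ ▸ Set.mem_univ (c w)))
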